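/- arXiv:1607.08648 — 2 statements merged into one kernel-verified Lean document; each statement's English description precedes it below -/
import Mathlib

section
/- There are no Gaussian integers x, y, z with xyz ≠ 0 and gcd(x, y, z) a unit such that x^4 + y^4 = z^2. -/
open Zsqrtd

/-!
Let `π = 1 + i`, the prime of `ℤ[i]` above `2`, and call `x` odd when `π ∤ x`. The square of an
odd `x` is `u + 4vi` with `u` odd, so `x⁴ ≡ 1 (mod 8)`.

If `x` and `y` are both even, `π` divides `gcd (x, y, z)`. If both are odd, `z² ≡ 2 (mod 8)`
forces `z = πw` with `w² ≡ -i (mod 4)`, which no odd square satisfies. Otherwise `y = πⁿ b` with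
`b` odd and `n ≥ 1`, and we descend on `n` in `ε₁ a⁴ + ε₂ π⁴ⁿ b⁴ = z²` (`ε₁`, `ε₂` units, `a`, `b`
odd and coprime). Modulo `4`, `ε₁ ≡ z²` is `±1`, hence `ε₁ = δ²` for a unit `δ`, and
`z ± δa² = π²s, π²t` with `s - t` a unit times `a²` and `st = ε₂ π⁴⁽ⁿ⁻¹⁾ b⁴`. For `n = 1` both `s`
and `t` are odd, so `s - t` is even: impossible. For `n ≥ 2` one of them, say `s`, is odd, so
`t = π⁴⁽ⁿ⁻¹⁾ t'` with `s`, `t'` coprime of product a unit times `b⁴`; thus `s`, `t'` are units times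
fourth powers `c⁴`, `f⁴`, and `s - t = εa²` is a solution of level `n - 1`.
-/

theorem Prime.dvd_and_dvd_of_dvd_sub_of_dvd_mul {R : Type*} [CommRing R] {p x y : R}
    (hp : Prime p) (hsub : p ∣ x - y) (hmul : p ∣ x * y) : p ∣ x ∧ p ∣ y := by
  rcases hp.dvd_or_dvd hmul with hx | hy
  · exact ⟨hx, by simpa using dvd_sub hx hsub⟩
  · exact ⟨by simpa using dvd_add hsub hy, hy⟩

theorem Prime.pow_dvd_and_pow_dvd_of_pow_dvd_sub_of_pow_dvd_mul {R : Type*} [CommRing R]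
    [IsDomain R] {p : R} (hp : Prime p) :
    ∀ (k : ℕ) {x y : R}, p ^ k ∣ x - y → p ^ (2 * k) ∣ x * y → p ^ k ∣ x ∧ p ^ k ∣ y
  | 0, _, _, _, _ => by simp
  | k + 1, x, y, hsub, hmul => by
    obtain ⟨⟨x, rfl⟩, ⟨y, rfl⟩⟩ := hp.pow_dvd_and_pow_dvd_of_pow_dvd_sub_of_pow_dvd_mul k
      ((pow_dvd_pow p k.le_succ).trans hsub) ((pow_dvd_pow p (by omega)).trans hmul)
    have hsub' : p ∣ x - y := by
      rw [← mul_sub, pow_succ] at hsub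
      exact (mul_dvd_mul_iff_left (pow_ne_zero k hp.ne_zero)).mp hsub
    have hmul' : p ^ 2 ∣ x * y := by
      rw [show p ^ k * x * (p ^ k * y) = p ^ (2 * k) * (x * y) by ring,
        show 2 * (k + 1) = 2 * k + 2 by ring, pow_add] at hmul
      exact (mul_dvd_mul_iff_left (pow_ne_zero _ hp.ne_zero)).mp hmul
    obtain ⟨hx, hy⟩ := hp.dvd_and_dvd_of_dvd_sub_of_dvd_mul hsub'
      ((dvd_pow_self p two_ne_zero).trans hmul')
    rw [pow_succ]
    exact ⟨mul_dvd_mul_left _ hx, mul_dvd_mul_left _ hy⟩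

theorem Prime.not_dvd_isUnit_mul_pow {M : Type*} [CommMonoidWithZero M] {p u a : M}
    (hp : Prime p) (hu : IsUnit u) (ha : ¬ p ∣ a) (k : ℕ) : ¬ p ∣ u * a ^ k := by
  rw [hu.dvd_mul_left]
  exact fun h => ha (hp.dvd_of_dvd_pow h)

namespace GaussianInt

def onePlusI : GaussianInt := ⟨1, 1⟩

local notation "π" => onePlusI

theorem onePlusI_sq : π ^ 2 = 2 * sqrtd := by decide

theorem onePlusI_pow_four : π ^ 4 = -4 := by decide

theorem sqrtd_sq : (sqrtd : GaussianInt) ^ 2 = -1 := by decide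

theorem isUnit_sqrtd : IsUnit (sqrtd : GaussianInt) :=
  .of_mul_eq_one (-sqrtd) (by decide)

theorem onePlusI_dvd_iff (x : GaussianInt) : π ∣ x ↔ Even (x.re + x.im) := by
  constructor
  · rintro ⟨c, rfl⟩
    exact ⟨c.re, by simp [onePlusI]⟩
  · rintro ⟨k, hk⟩
    refine ⟨⟨k, x.im - k⟩, ?_⟩
    ext <;> simp only [onePlusI, re_mul, im_mul] <;> omega

theorem prime_onePlusI : Prime π := by
  refine ⟨by decide, fun h => ?_, fun a b h => ?_⟩
  · simpa using (onePlusI_dvd_iff 1).mp h.dvd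
  · simp only [onePlusI_dvd_iff] at h ⊢
    have : (a * b).re + (a * b).im = (a.re + a.im) * (b.re + b.im) - 2 * (a.im * b.im) := by
      simp only [re_mul, im_mul]; ring
    rwa [this, Int.even_sub, iff_true_right (even_two_mul _), Int.even_mul] at h

theorem onePlusI_dvd_sub {s t : GaussianInt} (hs : ¬ π ∣ s) (ht : ¬ π ∣ t) : π ∣ s - t := by
  rw [onePlusI_dvd_iff, ← Int.not_odd_iff_even] at *
  simp only [re_sub, im_sub]
  grind

theorem exists_sq_eq_of_not_dvd {x : GaussianInt} (hx : ¬ π ∣ x) :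
    ∃ u v : ℤ, Odd u ∧ x ^ 2 = ⟨u, 4 * v⟩ := by
  rw [onePlusI_dvd_iff, Int.not_even_iff_odd] at hx
  obtain ⟨v, hv⟩ : Even (x.re * x.im) := by
    rcases Int.even_or_odd x.im with h | h
    · exact h.mul_left _
    · exact ((Int.odd_add'.mp hx).mp h).mul_right _
  refine ⟨(x.re + x.im) * (x.re - x.im), v, ?_, ?_⟩
  · have h : x.re - x.im = x.re + x.im - 2 * x.im := by ring
    exact hx.mul (h ▸ hx.sub_even (even_two_mul _))
  · ext <;> simp only [sq, re_mul, im_mul]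
    · ring
    · linear_combination 2 * hv

theorem eight_dvd_pow_four_sub_one {x : GaussianInt} (hx : ¬ π ∣ x) :
    (8 : GaussianInt) ∣ x ^ 4 - 1 := by
  obtain ⟨u, v, ⟨m, rfl⟩, hx2⟩ := exists_sq_eq_of_not_dvd hx
  obtain ⟨k, hk⟩ := Int.even_mul_succ_self m
  refine ⟨⟨k - 2 * v ^ 2, (2 * m + 1) * v⟩, ?_⟩
  rw [show x ^ 4 = (x ^ 2) ^ 2 by ring, hx2]
  ext <;> simp only [sq, re_sub, re_mul, re_one, re_ofNat, im_sub, im_mul, im_one, im_ofNat]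
  · linear_combination 4 * hk
  · ring

theorem four_dvd_im_of_four_dvd_sq_sub {w e : GaussianInt} (hw : ¬ π ∣ w)
    (h : (4 : GaussianInt) ∣ w ^ 2 - e) : 4 ∣ e.im := by
  obtain ⟨u, v, -, hw2⟩ := exists_sq_eq_of_not_dvd hw
  have := ((Zsqrtd.intCast_dvd 4 _).mp (by exact_mod_cast h)).2
  rw [hw2, im_sub] at this
  simpa using dvd_sub (dvd_mul_right 4 v) this

theorem exists_isUnit_sq_eq {e : GaussianInt} (he : IsUnit e) (h : 4 ∣ e.im) :
    ∃ δ : GaussianInt, IsUnit δ ∧ δ ^ 2 = e := by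
  have hnorm : e.re * e.re + e.im * e.im = 1 := by
    simpa [Zsqrtd.norm_def] using (Zsqrtd.norm_eq_one_iff' (by norm_num) e).mpr he
  have him : e.im = 0 := by
    have : -1 ≤ e.im ∧ e.im ≤ 1 := by constructor <;> nlinarith [mul_self_nonneg e.re]
    omega
  rcases mul_self_eq_one_iff.mp (by linarith [him ▸ hnorm] : e.re * e.re = 1) with hre | hre
  · exact ⟨1, isUnit_one, by ext <;> simp [hre, him]⟩
  · exact ⟨sqrtd, isUnit_sqrtd, by ext <;> simp [sq, hre, him]⟩

theorem pow_four_add_pow_four_ne_sq {x y z : GaussianInt} (hx : ¬ π ∣ x) (hy : ¬ π ∣ y) :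
    x ^ 4 + y ^ 4 ≠ z ^ 2 := by
  intro h
  obtain ⟨q₁, hq₁⟩ := eight_dvd_pow_four_sub_one hx
  obtain ⟨q₂, hq₂⟩ := eight_dvd_pow_four_sub_one hy
  set q := q₁ + q₂
  have hz : z ^ 2 = 2 * (1 + 4 * q) := by linear_combination -h + hq₁ + hq₂
  obtain ⟨w, rfl⟩ : π ∣ z := prime_onePlusI.dvd_of_dvd_pow (n := 2)
    (hz ▸ dvd_mul_of_dvd_left ((onePlusI_dvd_iff 2).mpr (by decide)) _)
  have hw : sqrtd * w ^ 2 = 1 + 4 * q :=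
    mul_left_cancel₀ two_ne_zero (by linear_combination hz - w ^ 2 * onePlusI_sq)
  have hw_odd : ¬ π ∣ w := by
    intro hπw
    have := dvd_sub (dvd_mul_of_dvd_right (dvd_pow hπw two_ne_zero) sqrtd)
      (dvd_mul_of_dvd_left (⟨-π ^ 3, by linear_combination onePlusI_pow_four⟩ : π ∣ 4) q)
    rw [hw, add_sub_cancel_right] at this
    exact prime_onePlusI.not_isUnit (isUnit_of_dvd_one this)
  have := four_dvd_im_of_four_dvd_sq_sub hw_odd (e := -sqrtd)
    ⟨-sqrtd * q, by linear_combination -sqrtd * hw + w ^ 2 * sqrtd_sq⟩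
  norm_num at this

def QuarticEqSolvable (n : ℕ) : Prop :=
  ∃ a b z ε₁ ε₂ : GaussianInt, IsUnit ε₁ ∧ IsUnit ε₂ ∧ ¬ π ∣ a ∧ ¬ π ∣ b ∧ IsCoprime a b ∧
    ε₁ * a ^ 4 + ε₂ * π ^ (4 * n) * b ^ 4 = z ^ 2

theorem exists_sub_eq_and_mul_eq_of_add_eq_sq {n : ℕ} {a b z ε₁ ε₂ : GaussianInt}
    (hε₁ : IsUnit ε₁) (ha : ¬ π ∣ a) (h : ε₁ * a ^ 4 + ε₂ * π ^ (4 * (n + 1)) * b ^ 4 = z ^ 2) :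
    ∃ ε s t : GaussianInt, IsUnit ε ∧ s - t = ε * a ^ 2 ∧ s * t = ε₂ * π ^ (4 * n) * b ^ 4 := by
  have hπ : π ^ (4 * (n + 1)) = π ^ 4 * π ^ (4 * n) := by ring
  have hz : ¬ π ∣ z := by
    intro hz
    have := dvd_sub (dvd_pow hz two_ne_zero)
      (⟨ε₂ * π ^ (4 * n + 3) * b ^ 4, by ring⟩ : π ∣ ε₂ * π ^ (4 * (n + 1)) * b ^ 4)
    rw [← h, add_sub_cancel_right] at this
    exact prime_onePlusI.not_dvd_isUnit_mul_pow hε₁ ha 4 this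
  obtain ⟨δ, hδ, rfl⟩ : ∃ δ, IsUnit δ ∧ δ ^ 2 = ε₁ := by
    refine exists_isUnit_sq_eq hε₁ (four_dvd_im_of_four_dvd_sq_sub hz ?_)
    obtain ⟨q, hq⟩ := eight_dvd_pow_four_sub_one ha
    exact ⟨2 * ε₁ * q - ε₂ * π ^ (4 * n) * b ^ 4, by
      linear_combination
        -h + ε₁ * hq + ε₂ * b ^ 4 * hπ + ε₂ * π ^ (4 * n) * b ^ 4 * onePlusI_pow_four⟩
  obtain ⟨⟨s, hs⟩, ⟨t, ht⟩⟩ := prime_onePlusI.pow_dvd_and_pow_dvd_of_pow_dvd_sub_of_pow_dvd_mul 2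
    (x := z + δ * a ^ 2) (y := z - δ * a ^ 2)
    ⟨-sqrtd * δ * a ^ 2, by
      linear_combination δ * a ^ 2 * sqrtd * onePlusI_sq + 2 * δ * a ^ 2 * sqrtd_sq⟩
    ⟨ε₂ * π ^ (4 * n) * b ^ 4, by linear_combination -h + ε₂ * b ^ 4 * hπ⟩
  refine ⟨-sqrtd * δ, s, t, isUnit_sqrtd.neg.mul hδ, ?_, ?_⟩
  · refine mul_left_cancel₀ (pow_ne_zero 2 prime_onePlusI.ne_zero) ?_
    linear_combination -hs + ht + δ * a ^ 2 * sqrtd * onePlusI_sq + 2 * δ * a ^ 2 * sqrtd_sq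
  · refine mul_left_cancel₀ (pow_ne_zero 4 prime_onePlusI.ne_zero) ?_
    linear_combination -h - (z - δ * a ^ 2) * hs - π ^ 2 * s * ht + ε₂ * b ^ 4 * hπ

theorem quarticEqSolvable_of_sub_eq_of_mul_eq {n : ℕ} {a b s t ε ε₂ : GaussianInt}
    (hε : IsUnit ε) (hε₂ : IsUnit ε₂) (hb : ¬ π ∣ b) (hab : IsCoprime a b) (hs : ¬ π ∣ s)
    (hsub : s - t = ε * a ^ 2) (hmul : s * t = ε₂ * π ^ (4 * n) * b ^ 4) :
    QuarticEqSolvable n := by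
  obtain ⟨t, rfl⟩ : π ^ (4 * n) ∣ t :=
    prime_onePlusI.pow_dvd_of_dvd_mul_left _ hs ⟨ε₂ * b ^ 4, by rw [hmul]; ring⟩
  have hmul' : s * t = ε₂ * b ^ 4 :=
    mul_left_cancel₀ (pow_ne_zero (4 * n) prime_onePlusI.ne_zero) (by linear_combination hmul)
  have ht : ¬ π ∣ t := fun h =>
    prime_onePlusI.not_dvd_isUnit_mul_pow hε₂ hb 4 (hmul' ▸ dvd_mul_of_dvd_right h s)
  have hst : IsCoprime s t := by
    have := (isCoprime_mul_units_left hε hε₂ _ _).mpr (hab.pow (m := 2) (n := 4))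
    rw [← hsub, ← hmul', sub_eq_add_neg, ← neg_mul, mul_comm] at this
    exact this.of_mul_right_right.of_add_mul_left_left
  obtain ⟨ε₂, rfl⟩ := hε₂
  obtain ⟨c, hc⟩ := exists_associated_pow_of_associated_pow_mul (c := b) (k := 4) hst
    ⟨ε₂, by rw [hmul']; ring⟩
  obtain ⟨f, hf⟩ := exists_associated_pow_of_associated_pow_mul (c := b) (k := 4) hst.symm
    ⟨ε₂, by rw [mul_comm t, hmul']; ring⟩
  obtain ⟨ε, rfl⟩ := hε
  obtain ⟨u, hu⟩ := hc
  obtain ⟨v, hv⟩ := hf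
  have hcs : c ∣ s := (dvd_pow_self c four_ne_zero).trans ⟨u, hu.symm⟩
  have hft : f ∣ t := (dvd_pow_self f four_ne_zero).trans ⟨v, hv.symm⟩
  refine ⟨c, f, a, ↑(ε⁻¹ * u), ↑(-(ε⁻¹ * v)), Units.isUnit _, Units.isUnit _,
    fun h => hs (h.trans hcs), fun h => ht (h.trans hft),
    (hst.of_isCoprime_of_dvd_left hcs).of_isCoprime_of_dvd_right hft, ?_⟩
  rw [← hu, ← hv] at hsub
  push_cast
  linear_combination (↑ε⁻¹ : GaussianInt) * hsub + a ^ 2 * ε.inv_mul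

theorem not_quarticEqSolvable_succ (n : ℕ) : ¬ QuarticEqSolvable (n + 1) := by
  induction n with
  | zero =>
    rintro ⟨a, b, z, ε₁, ε₂, hε₁, hε₂, ha, hb, -, h⟩
    obtain ⟨ε, s, t, hε, hsub, hmul⟩ := exists_sub_eq_and_mul_eq_of_add_eq_sq hε₁ ha h
    have hst : ¬ π ∣ s * t := by
      rw [hmul, mul_zero, pow_zero, mul_one]
      exact prime_onePlusI.not_dvd_isUnit_mul_pow hε₂ hb 4
    have := onePlusI_dvd_sub (fun h => hst (dvd_mul_of_dvd_left h t))
      (fun h => hst (dvd_mul_of_dvd_right h s))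
    exact prime_onePlusI.not_dvd_isUnit_mul_pow hε ha 2 (hsub ▸ this)
  | succ n ih =>
    rintro ⟨a, b, z, ε₁, ε₂, hε₁, hε₂, ha, hb, hab, h⟩
    obtain ⟨ε, s, t, hε, hsub, hmul⟩ := exists_sub_eq_and_mul_eq_of_add_eq_sq hε₁ ha h
    by_cases hs : π ∣ s
    · have ht : ¬ π ∣ t := fun ht =>
        prime_onePlusI.not_dvd_isUnit_mul_pow hε ha 2 (hsub ▸ dvd_sub hs ht)
      exact ih (quarticEqSolvable_of_sub_eq_of_mul_eq (t := s) hε.neg hε₂ hb hab ht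
        (by linear_combination -hsub) (by linear_combination hmul))
    · exact ih (quarticEqSolvable_of_sub_eq_of_mul_eq hε hε₂ hb hab hs hsub hmul)

theorem pow_four_add_pow_four_ne_sq_of_dvd {x y z : GaussianInt} (hxy : IsCoprime x y)
    (hx : ¬ π ∣ x) (hy : π ∣ y) (hy₀ : y ≠ 0) : x ^ 4 + y ^ 4 ≠ z ^ 2 := by
  intro h
  obtain ⟨n, b, hb, rfl⟩ := WfDvdMonoid.max_power_factor hy₀ prime_onePlusI.irreducible
  cases n with
  | zero => exact hb (by simpa using hy)
  | succ n =>
    exact not_quarticEqSolvable_succ n ⟨x, b, z, 1, 1, isUnit_one, isUnit_one, hx, hb,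
      hxy.of_mul_right_right, by rw [← h]; ring⟩

end GaussianInt

/-- The equation `x⁴ + y⁴ = z²` has no nontrivial solutions over the Gaussian
integers: there are no `x, y, z : ℤ[i]` with `x * y * z ≠ 0`, `gcd (x, y, z)`
a unit, and `x ^ 4 + y ^ 4 = z ^ 2`. -/
theorem no_nontrivial_solution_x4_add_y4_eq_z2 :
    ¬ ∃ x y z : GaussianInt, x * y * z ≠ 0 ∧
      (∀ d : GaussianInt, d ∣ x → d ∣ y → d ∣ z → IsUnit d) ∧
      x ^ 4 + y ^ 4 = z ^ 2 := by
  rintro ⟨x, y, z, hxyz, hgcd, h⟩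
  have hx : x ≠ 0 := left_ne_zero_of_mul (left_ne_zero_of_mul hxyz)
  have hy : y ≠ 0 := right_ne_zero_of_mul (left_ne_zero_of_mul hxyz)
  have hxy : IsCoprime x y := isCoprime_of_prime_dvd (by simp [hx]) fun p hp hpx hpy =>
    hp.not_isUnit <| hgcd p hpx hpy <| hp.dvd_of_dvd_pow (n := 2) <|
      h ▸ dvd_add (dvd_pow hpx four_ne_zero) (dvd_pow hpy four_ne_zero)
  by_cases hπx : GaussianInt.onePlusI ∣ x <;> by_cases hπy : GaussianInt.onePlusI ∣ y
  · exact GaussianInt.prime_onePlusI.not_isUnit (hxy.isUnit_of_dvd' hπx hπy)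
  · exact GaussianInt.pow_four_add_pow_four_ne_sq_of_dvd hxy.symm hπy hπx hx (by rw [add_comm, h])
  · exact GaussianInt.pow_four_add_pow_four_ne_sq_of_dvd hxy hπx hπy hy h
  · exact GaussianInt.pow_four_add_pow_four_ne_sq hπx hπy h
end

section
/- Let x, y, z be Gaussian integers with xyz ≠ 0, gcd(x, y) a unit, x not divisible by 1+i, y divisible by 1+i, and z^2 = x^4 + 6(1+i)·x^2y^2 + 2i·y^4. Then there exist Gaussian integers u' and v' such that u' + v' = z, u' - v' = x^2 + (1+i)·y^2, u'·v' = (1+i)·(x·y)^2, and u' and v' are coprime (their gcd is a unit). -/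
/-! Write `π = 1 + i`, a prime with `π² = 2i`. Once `π ∣ y`, `z² - (x²)² = π³ · (…)`, and since
`π² ∣ 2` this forces `π² ∣ z + x²`; hence `z + x² + πy²` is even and `u'` is half of it.
The identity `u'v' = π(xy)²` is then `4u'v' = z² - (x² + πy²)²` together with `π² = 2i`.
A common divisor of `u'` and `v'` divides `u' - v' = x² + πy²` and `u'v' = π(xy)²`, which are
coprime because `π ∤ x` and `x`, `y` are coprime. -/

open Zsqrtd

theorem Prime.sq_dvd_add_of_pow_three_dvd_sq_sub_sq {R : Type*} [CommRing R] [IsDomain R]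
    {p a b : R} (hp : Prime p) (hp2 : p ^ 2 ∣ 2) (h : p ^ 3 ∣ a ^ 2 - b ^ 2) :
    p ^ 2 ∣ a + b := by
  obtain ⟨e, he⟩ := hp2
  have hsub_eq : a - b = a + b - p * (p * e * b) := by linear_combination -b * he
  obtain ⟨c, hc⟩ : p ∣ a + b := by
    rw [sq_sub_sq] at h
    rcases hp.dvd_or_dvd ((dvd_pow_self p three_ne_zero).trans h) with hadd | hsub
    · exact hadd
    · simpa [hsub_eq] using hsub.add (dvd_mul_right p (p * e * b))
  have hprod : a ^ 2 - b ^ 2 = p ^ 2 * (c * (c - p * e * b)) := by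
    linear_combination (a - b + p * c) * hc + p * c * hsub_eq
  rw [hprod, pow_succ, mul_dvd_mul_iff_left (pow_ne_zero 2 hp.ne_zero)] at h
  have hc' : p ∣ c := by
    rcases hp.dvd_or_dvd h with hc' | hc'
    · exact hc'
    · simpa using hc'.add (dvd_mul_of_dvd_left (dvd_mul_right p e) b)
  rw [hc, sq]
  exact mul_dvd_mul_left p hc'

theorem IsCoprime.sq_add_mul_sq_mul_sq {R : Type*} [CommRing R] {q x y : R}
    (hqx : IsCoprime q x) (hxy : IsCoprime x y) :
    IsCoprime (x ^ 2 + q * y ^ 2) (q * (x * y) ^ 2) := by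
  have hq : IsCoprime (x ^ 2 + q * y ^ 2) q := (hqx.symm.pow_left (m := 2)).add_mul_left_left _
  have hx : IsCoprime (x ^ 2 + q * y ^ 2) x := by
    convert (hqx.mul_left (hxy.symm.pow_left (m := 2))).add_mul_left_left x using 1; ring
  have hy : IsCoprime (x ^ 2 + q * y ^ 2) y := by
    convert (hxy.pow_left (m := 2)).add_mul_left_left (q * y) using 1; ring
  exact hq.mul_right (hx.mul_right hy).pow_right

theorem Zsqrtd.irreducible_of_natAbs_norm_prime {d : ℤ} {x : ℤ√d} (h : x.norm.natAbs.Prime) :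
    Irreducible x := by
  refine ⟨fun hx => h.ne_one (norm_eq_one_iff.2 hx), fun a b hab => ?_⟩
  rw [hab, norm_mul, Int.natAbs_mul, Nat.prime_mul_iff] at h
  rcases h with ⟨-, hb⟩ | ⟨-, ha⟩
  · exact Or.inr (norm_eq_one_iff.1 hb)
  · exact Or.inl (norm_eq_one_iff.1 ha)

namespace GaussianInt

theorem one_add_sqrtd_sq : (1 + sqrtd : GaussianInt) ^ 2 = 2 * sqrtd := by decide

theorem one_add_sqrtd_sq_dvd_two : (1 + sqrtd : GaussianInt) ^ 2 ∣ 2 := ⟨-sqrtd, by decide⟩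

theorem prime_one_add_sqrtd : Prime (1 + sqrtd : GaussianInt) :=
  (Zsqrtd.irreducible_of_natAbs_norm_prime (by decide)).prime

end GaussianInt

theorem resolvent_factorization_one_add_i_general (x y z : GaussianInt)
    (hgcd : ∀ d : GaussianInt, d ∣ x → d ∣ y → IsUnit d)
    (hx : ¬ (1 + sqrtd) ∣ x) (hy : (1 + sqrtd) ∣ y)
    (heq : z ^ 2 = x ^ 4 + 6 * (1 + sqrtd) * x ^ 2 * y ^ 2
        + 2 * sqrtd * y ^ 4) :
    ∃ u' v' : GaussianInt, u' + v' = z ∧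
      u' - v' = x ^ 2 + (1 + sqrtd) * y ^ 2 ∧
      u' * v' = (1 + sqrtd) * (x * y) ^ 2 ∧
      (∀ d : GaussianInt, d ∣ u' → d ∣ v' → IsUnit d) := by
  set π : GaussianInt := 1 + sqrtd
  have hπ : Prime π := GaussianInt.prime_one_add_sqrtd
  have hπ2 : π ^ 2 = 2 * sqrtd := GaussianInt.one_add_sqrtd_sq
  obtain ⟨t, rfl⟩ := hy
  have hcube : π ^ 3 ∣ z ^ 2 - (x ^ 2) ^ 2 :=
    ⟨6 * x ^ 2 * t ^ 2 + 2 * sqrtd * π * t ^ 4, by linear_combination heq⟩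
  obtain ⟨c, hc⟩ :=
    hπ.sq_dvd_add_of_pow_three_dvd_sq_sub_sq GaussianInt.one_add_sqrtd_sq_dvd_two hcube
  obtain ⟨u, hu⟩ : 2 ∣ z + x ^ 2 + π * (π * t) ^ 2 :=
    ⟨sqrtd * (c + π * t ^ 2), by linear_combination hc + (c + π * t ^ 2) * hπ2⟩
  have hsub : u - (z - u) = x ^ 2 + π * (π * t) ^ 2 := by linear_combination -hu
  have hmul : u * (z - u) = π * (x * (π * t)) ^ 2 := by
    refine mul_left_cancel₀ (by decide : (4 : GaussianInt) ≠ 0) ?_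
    linear_combination (2 * u - z + x ^ 2 + π * (π * t) ^ 2) * hu + heq - (π * t) ^ 4 * hπ2
  have hcop := (hπ.irreducible.coprime_iff_not_dvd.2 hx).sq_add_mul_sq_mul_sq
    (isRelPrime_iff_isCoprime.1 fun d => hgcd d)
  refine ⟨u, z - u, add_sub_cancel u z, hsub, hmul, fun d hdu hdv => ?_⟩
  exact hcop.isUnit_of_dvd' (hsub ▸ dvd_sub hdu hdv) (hmul ▸ dvd_mul_of_dvd_left hdu _)

/-- Resolvent factorization for the quartic `x⁴ + 6(1+i)x²y² + 2i·y⁴ = z²`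
over `ℤ[i]`: if `x, y, z` are Gaussian integers with `x * y * z ≠ 0`,
`gcd (x, y)` a unit, `x` odd (not divisible by `1 + i`), `y` even (divisible
by `1 + i`), and `z² = x⁴ + 6(1+i)x²y² + 2i·y⁴`, then there exist coprime
Gaussian integers `u'` and `v'` with `u' + v' = z`,
`u' - v' = x² + (1+i)·y²`, and `u'·v' = (1+i)·(x·y)²`. -/
theorem resolvent_factorization_one_add_i (x y z : GaussianInt)
    (hxyz : x * y * z ≠ 0)
    (hgcd : ∀ d : GaussianInt, d ∣ x → d ∣ y → IsUnit d)
    (hx : ¬ (1 + sqrtd) ∣ x) (hy : (1 + sqrtd) ∣ y)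
    (heq : z ^ 2 = x ^ 4 + 6 * (1 + sqrtd) * x ^ 2 * y ^ 2
        + 2 * sqrtd * y ^ 4) :
    ∃ u' v' : GaussianInt, u' + v' = z ∧
      u' - v' = x ^ 2 + (1 + sqrtd) * y ^ 2 ∧
      u' * v' = (1 + sqrtd) * (x * y) ^ 2 ∧
      (∀ d : GaussianInt, d ∣ u' → d ∣ v' → IsUnit d) :=
  resolvent_factorization_one_add_i_general x y z hgcd hx hy heq
end
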